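/- arXiv:2409.09405 — 2 statements merged into one kernel-verified Lean document; each statement's English description precedes it below -/
import Mathlib

section
/- With the notation of the previous setting, if λ is a zero of p_{n+1}(·,t) then ∑_{j=0}^{n} p_j(λ)² = b_{n+1}·p'_{n+1}(λ,t)·p_n(λ) + ((f² − 1)/f²)·p_n(λ)², where p'_{n+1}(·,t) is the derivative with respect to x. -/
open Polynomial

/-- Christoffel–Darboux confluent identity. -/
lemma cd_lemma (a b : ℕ → ℝ) (p : ℕ → Polynomial ℝ)
    (hp0 : p 0 = 1)
    (hrec : ∀ k : ℕ, X * p k =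
      C (b (k + 1)) * p (k + 1) + C (a (k + 1)) * p k +
        C (b k) * (if k = 0 then 0 else p (k - 1))) :
    ∀ k : ℕ, C (b (k + 1)) *
        (derivative (p (k + 1)) * p k - derivative (p k) * p (k + 1)) =
      ∑ j ∈ Finset.range (k + 1), (p j) ^ 2 := by
  intro k
  induction k with
  | zero =>
      have h0 := hrec 0
      rw [if_pos rfl] at h0
      simp only [hp0, mul_zero, add_zero, mul_one, Nat.zero_add] at h0
      have h1 : C (b 1) * p 1 = X - C (a 1) := by linear_combination -h0
      have h1' : C (b 1) * derivative (p 1) = 1 := by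
        have := congrArg derivative h1
        simpa [derivative_mul] using this
      simp [hp0]
      linear_combination h1'
  | succ k ih =>
      have h0 := hrec (k + 1)
      rw [if_neg (Nat.succ_ne_zero k)] at h0
      simp only [Nat.add_sub_cancel, show k + 1 + 1 = k + 2 from rfl] at h0
      have h : C (b (k + 2)) * p (k + 2) =
          (X - C (a (k + 2))) * p (k + 1) - C (b (k + 1)) * p k := by
        linear_combination -h0
      have h' : C (b (k + 2)) * derivative (p (k + 2)) =
          p (k + 1) + (X - C (a (k + 2))) * derivative (p (k + 1))
            - C (b (k + 1)) * derivative (p k) := by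
        have := congrArg derivative h
        simpa [derivative_mul] using this
      rw [Finset.sum_range_succ, ← ih]
      linear_combination p (k + 1) * h' - derivative (p (k + 1)) * h

/-- with `q = p_{n+1}(·,t)` as before, if `λ` is a zero of `q` then
`∑_{j=0}^{n} pⱼ(λ)² = b_{n+1} q'(λ) pₙ(λ) + ((f² − 1)/f²) pₙ(λ)²`. -/
theorem stmt5 (a b : ℕ → ℝ) (hb : ∀ k, 0 < b k) (p : ℕ → Polynomial ℝ)
    (hp0 : p 0 = 1)
    (hrec : ∀ k : ℕ, X * p k =
      C (b (k + 1)) * p (k + 1) + C (a (k + 1)) * p k +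
        C (b k) * (if k = 0 then 0 else p (k - 1)))
    (n : ℕ) (hn : 1 ≤ n) (f : ℝ) (hf : f ≠ 0) (q : Polynomial ℝ)
    (hq : C (f ^ 2 * b (n + 1)) * q =
      (X - C (a (n + 1))) * p n - C (b n * f ^ 2) * p (n - 1))
    (lam : ℝ) (hlam : q.eval lam = 0) :
    ∑ j ∈ Finset.range (n + 1), ((p j).eval lam) ^ 2 =
      b (n + 1) * (Polynomial.derivative q).eval lam * (p n).eval lam +
        ((f ^ 2 - 1) / f ^ 2) * ((p n).eval lam) ^ 2 := by
  obtain ⟨k, rfl⟩ : ∃ k, n = k + 1 := ⟨n - 1, (Nat.succ_pred_eq_of_pos hn).symm⟩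
  simp only [show k + 1 + 1 = k + 2 from rfl, Nat.add_sub_cancel] at hq ⊢
  set A := (p (k + 1)).eval lam with hA
  set A' := (derivative (p (k + 1))).eval lam with hA'
  set B := (p k).eval lam with hB
  set B' := (derivative (p k)).eval lam with hB'
  set Q' := (derivative q).eval lam with hQ'
  -- Christoffel–Darboux at k, evaluated at lam
  have hcd := congrArg (fun r => eval lam r) (cd_lemma a b p hp0 hrec k)
  simp only [eval_mul, eval_sub, eval_C, eval_finset_sum, eval_pow] at hcd
  -- evaluate hq at lam
  have h2 : (lam - a (k + 2)) * A = b (k + 1) * f ^ 2 * B := by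
    have := congrArg (fun r => eval lam r) hq
    simp only [eval_mul, eval_sub, eval_C, eval_X, hlam, mul_zero] at this
    linarith [this]
  -- evaluate derivative of hq at lam
  have h3 : f ^ 2 * b (k + 2) * Q' = A + (lam - a (k + 2)) * A'
      - b (k + 1) * f ^ 2 * B' := by
    have := congrArg (fun r => eval lam (derivative r)) hq
    simp only [Nat.add_sub_cancel, derivative_mul, derivative_sub, derivative_C,
      derivative_X, zero_mul, zero_add, sub_zero, zero_sub, eval_mul, eval_sub,
      eval_add, eval_neg, eval_C, eval_X, eval_one, hlam, mul_zero, one_mul] at this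
    linarith [this]
  rw [Finset.sum_range_succ]
  have hf2 : f ^ 2 ≠ 0 := pow_ne_zero 2 hf
  have hsum : ∑ j ∈ Finset.range (k + 1), ((p j).eval lam) ^ 2 =
      b (k + 1) * (A' * B - B' * A) := hcd.symm
  rw [hsum]
  field_simp
  linear_combination (-A) * h3 + (-A') * h2
end

section
/- For every integer n ≥ 5 and every real α > −1: (2n+α+1 − U(n,α)) · (√(n² − 2n + αn + 2) − 3) > (1/12)·(n(α+2) + n² + α + 1), where U(n,α) = [(α+2)(α+3)(3n+2α+2) − √((α+2)(α+3)(9(α+2)(α+3) + 2(2α+5)(α²+5α+10)(n−1) + (5α²+25α+38)(n−1)²))]/(2(n+α+1)(n+α+2)). -/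
set_option maxHeartbeats 1000000 in
theorem aux_poly1 (m α : ℝ) (hm : 5 ≤ m) (hα : -1 < α) (hc : α ≤ m) :
    (α + 2) * (α + 3) * (3 * m + 2 * α + 2) ≤
      (7/6 * m + 7/12 * α - 3/2) * (2 * (m + α + 1) * (m + α + 2)) := by
  nlinarith [mul_nonneg (mul_nonneg (by linarith : (0:ℝ) ≤ α + 1)
      (by linarith : (0:ℝ) ≤ m - α)) (by linarith : (0:ℝ) ≤ m + α + 2),
    mul_nonneg (by linarith : (0:ℝ) ≤ α + 1) (by linarith : (0:ℝ) ≤ m - α),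
    mul_nonneg (by linarith : (0:ℝ) ≤ α + 1) (by linarith : (0:ℝ) ≤ m - 5),
    mul_nonneg (mul_nonneg (by linarith : (0:ℝ) ≤ α + 1)
      (by linarith : (0:ℝ) ≤ m - 5)) (by linarith : (0:ℝ) ≤ m - 5),
    mul_nonneg (mul_nonneg (mul_nonneg (by linarith : (0:ℝ) ≤ α + 1)
      (by linarith : (0:ℝ) ≤ α + 1)) (by linarith : (0:ℝ) ≤ m - 5))
      (by linarith : (0:ℝ) ≤ m - 5),
    mul_nonneg (by linarith : (0:ℝ) ≤ m - 5) (by linarith : (0:ℝ) ≤ m - 5),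
    mul_nonneg (mul_nonneg (by linarith : (0:ℝ) ≤ m - 5) (by linarith : (0:ℝ) ≤ m - 5))
      (by linarith : (0:ℝ) ≤ m - 5),
    mul_nonneg (mul_nonneg (by linarith : (0:ℝ) ≤ α + 1)
      (by linarith : (0:ℝ) ≤ α + 1)) (by linarith : (0:ℝ) ≤ m - 5)]
set_option maxHeartbeats 1000000 in
theorem aux_poly2a (m α : ℝ) (hm : 5 ≤ m) (hc : m ≤ α) (hc2 : α ≤ 3 * m) :
    (α + 2) * (α + 3) * (3 * m + 2 * α + 2) - (2 * m + α + 1) * (2 * (m + α + 1) * (m + α + 2))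
      + ((m + α + 1) * (m + α + 2)) * (m + α / 2) ≤ 0 := by
  have hu : (0:ℝ) ≤ α - m := by linarith
  have hv : (0:ℝ) ≤ m - 5 := by linarith
  have hw : (0:ℝ) ≤ 3 * m - α := by linarith
  nlinarith [mul_nonneg (pow_nonneg hu 0) (pow_nonneg hv 0), mul_nonneg (pow_nonneg hu 0) (pow_nonneg hv 1), mul_nonneg (pow_nonneg hu 0) (pow_nonneg hv 2), mul_nonneg (pow_nonneg hu 0) (pow_nonneg hv 3), mul_nonneg (pow_nonneg hu 1) (pow_nonneg hv 0), mul_nonneg (pow_nonneg hu 1) (pow_nonneg hv 1), mul_nonneg (pow_nonneg hu 1) (pow_nonneg hv 2), mul_nonneg (pow_nonneg hu 2) (pow_nonneg hv 1), mul_nonneg (mul_nonneg hu hu) hw, mul_nonneg hu hw]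

set_option maxHeartbeats 1000000 in
theorem aux_poly2bN (m α : ℝ) (hm : 5 ≤ m) (hc2 : 3 * m ≤ α) :
    (α + 2) * (α + 3) * (3 * m + 2 * α + 2)
      - (2 * m + α + 1) * (2 * (m + α + 1) * (m + α + 2)) ≤ 0 := by
  have hu : (0:ℝ) ≤ α - 3 * m := by linarith
  have hv : (0:ℝ) ≤ m - 5 := by linarith
  nlinarith [mul_nonneg (pow_nonneg hu 0) (pow_nonneg hv 0), mul_nonneg (pow_nonneg hu 0) (pow_nonneg hv 1), mul_nonneg (pow_nonneg hu 0) (pow_nonneg hv 2), mul_nonneg (pow_nonneg hu 0) (pow_nonneg hv 3), mul_nonneg (pow_nonneg hu 1) (pow_nonneg hv 0), mul_nonneg (pow_nonneg hu 1) (pow_nonneg hv 1), mul_nonneg (pow_nonneg hu 1) (pow_nonneg hv 2), mul_nonneg (pow_nonneg hu 2) (pow_nonneg hv 0), mul_nonneg (pow_nonneg hu 2) (pow_nonneg hv 1)]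

set_option maxHeartbeats 2000000 in
theorem aux_poly2bS (m α : ℝ) (hm : 5 ≤ m) (hc2 : 3 * m ≤ α) :
    ((m + α + 1) * (m + α + 2)) ^ 2 * (m ^ 2 - 2 * m + α * m + 2) ≤
      (α + 2) * (α + 3) *
        (9 * (α + 2) * (α + 3) + 2 * (2 * α + 5) * (α ^ 2 + 5 * α + 10) * (m - 1) +
          (5 * α ^ 2 + 25 * α + 38) * (m - 1) ^ 2) := by
  have hu : (0:ℝ) ≤ α - 3 * m := by linarith
  have hv : (0:ℝ) ≤ m - 5 := by linarith
  nlinarith [mul_nonneg (pow_nonneg hu 0) (pow_nonneg hv 0), mul_nonneg (pow_nonneg hu 0) (pow_nonneg hv 1), mul_nonneg (pow_nonneg hu 0) (pow_nonneg hv 2), mul_nonneg (pow_nonneg hu 0) (pow_nonneg hv 3), mul_nonneg (pow_nonneg hu 0) (pow_nonneg hv 4), mul_nonneg (pow_nonneg hu 0) (pow_nonneg hv 5), mul_nonneg (pow_nonneg hu 0) (pow_nonneg hv 6), mul_nonneg (pow_nonneg hu 1) (pow_nonneg hv 0), mul_nonneg (pow_nonneg hu 1) (pow_nonneg hv 1),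 mul_nonneg (pow_nonneg hu 1) (pow_nonneg hv 2), mul_nonneg (pow_nonneg hu 1) (pow_nonneg hv 3), mul_nonneg (pow_nonneg hu 1) (pow_nonneg hv 4), mul_nonneg (pow_nonneg hu 1) (pow_nonneg hv 5), mul_nonneg (pow_nonneg hu 2) (pow_nonneg hv 0), mul_nonneg (pow_nonneg hu 2) (pow_nonneg hv 1), mul_nonneg (pow_nonneg hu 2) (pow_nonneg hv 2), mul_nonneg (pow_nonneg hu 2) (pow_nonneg hv 3), mul_nonneg (pow_nonneg hu 2) (pow_nonneg hv 4), mul_nonneg (pow_nonneg hu 3) (pow_nonneg hv 0), mul_nonneg (pow_nonneg hu 3) (pow_nonneg hv 1), mul_nonneg (pow_nonneg hu 3) (pow_nonneg hv 2), mul_nonneg (pow_nonneg hu 3) (pow_nonneg hv 3), mul_nonneg (pow_nonneg hu 4) (pow_nonneg hv 0), mul_nonneg (pow_nonneg hu 4) (pow_nonneg hv 1), mul_nonneg (pow_nonneg hu 4) (pow_nonneg hv 2), mul_nonneg (pow_nonneg hu 5) (pow_nonneg hv 0), mul_nonneg (pow_nonneg hu 5) (pow_nonneg hv 1)]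

set_option maxHeartbeats 1000000 in
/-- for every integer `n ≥ 5` and real `α > −1`,
`(2n+α+1 − U(n,α)) (√(n² − 2n + αn + 2) − 3) > (1/12)(n(α+2) + n² + α + 1)`, where
`U(n,α) = [(α+2)(α+3)(3n+2α+2) − √((α+2)(α+3)(9(α+2)(α+3) + 2(2α+5)(α²+5α+10)(n−1)
+ (5α²+25α+38)(n−1)²))]/(2(n+α+1)(n+α+2))`. -/
theorem stmt14 (n : ℕ) (α : ℝ) (hn : 5 ≤ n) (hα : -1 < α) :
    (2 * (n : ℝ) + α + 1 -
        ((α + 2) * (α + 3) * (3 * (n : ℝ) + 2 * α + 2) -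
            Real.sqrt ((α + 2) * (α + 3) *
              (9 * (α + 2) * (α + 3) +
                2 * (2 * α + 5) * (α ^ 2 + 5 * α + 10) * ((n : ℝ) - 1) +
                (5 * α ^ 2 + 25 * α + 38) * ((n : ℝ) - 1) ^ 2))) /
          (2 * ((n : ℝ) + α + 1) * ((n : ℝ) + α + 2))) *
      (Real.sqrt ((n : ℝ) ^ 2 - 2 * (n : ℝ) + α * (n : ℝ) + 2) - 3) >
      1 / 12 * ((n : ℝ) * (α + 2) + (n : ℝ) ^ 2 + α + 1) := by
  have hm : (5:ℝ) ≤ (n:ℝ) := by exact_mod_cast hn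
  set m : ℝ := (n:ℝ) with hmdef
  set s : ℝ := Real.sqrt ((α + 2) * (α + 3) *
      (9 * (α + 2) * (α + 3) + 2 * (2 * α + 5) * (α ^ 2 + 5 * α + 10) * (m - 1) +
        (5 * α ^ 2 + 25 * α + 38) * (m - 1) ^ 2)) with hsdef
  set x : ℝ := Real.sqrt (m ^ 2 - 2 * m + α * m + 2) with hxdef
  have hD : 0 < 2 * (m + α + 1) * (m + α + 2) := by nlinarith
  have hs0 : 0 ≤ s := Real.sqrt_nonneg _
  have hx0 : 0 ≤ x := Real.sqrt_nonneg _
  have hX0 : 0 ≤ m ^ 2 - 2 * m + α * m + 2 := by nlinarith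
  have hx2 : x ^ 2 = m ^ 2 - 2 * m + α * m + 2 := Real.sq_sqrt hX0
  have hxub : x ≤ m + α / 2 := by
    have h1 : m ^ 2 - 2 * m + α * m + 2 ≤ (m + α / 2) ^ 2 := by nlinarith
    rw [hxdef]
    calc Real.sqrt (m ^ 2 - 2 * m + α * m + 2) ≤ Real.sqrt ((m + α / 2) ^ 2) :=
          Real.sqrt_le_sqrt h1
      _ = m + α / 2 := Real.sqrt_sq (by nlinarith)
  have hx3 : 3 ≤ x := by
    rw [hxdef]
    exact Real.le_sqrt_of_sq_le (by nlinarith)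
  rcases le_total α m with hc | hc
  · -- Case 1 : α ≤ m
    have hpoly := aux_poly1 m α hm hα hc
    have hU : ((α + 2) * (α + 3) * (3 * m + 2 * α + 2) - s) /
        (2 * (m + α + 1) * (m + α + 2)) ≤ 7/6 * m + 7/12 * α - 3/2 := by
      rw [div_le_iff₀ hD]; linarith
    have hF : 5/6 * (x + 3) ≤ 2 * m + α + 1 -
        ((α + 2) * (α + 3) * (3 * m + 2 * α + 2) - s) /
          (2 * (m + α + 1) * (m + α + 2)) := by linarith
    have hprod : 5/6 * (x + 3) * (x - 3) ≤
        (2 * m + α + 1 -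
          ((α + 2) * (α + 3) * (3 * m + 2 * α + 2) - s) /
            (2 * (m + α + 1) * (m + α + 2))) * (x - 3) :=
      mul_le_mul_of_nonneg_right hF (by linarith)
    have hfin : 1 / 12 * (m * (α + 2) + m ^ 2 + α + 1) < 5/6 * (x + 3) * (x - 3) := by
      nlinarith [hx2, mul_pos (by linarith : (0:ℝ) < α + 1) (by linarith : (0:ℝ) < 9 * m - 1),
        mul_nonneg (by linarith : (0:ℝ) ≤ m - 5) (by linarith : (0:ℝ) ≤ 9 * m + 14)]
    linarith
  · -- Case 2 : m ≤ α
    have hkey : (α + 2) * (α + 3) * (3 * m + 2 * α + 2)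
        - (2 * m + α + 1) * (2 * (m + α + 1) * (m + α + 2))
        + ((m + α + 1) * (m + α + 2)) * x ≤ s := by
      rcases le_total α (3 * m) with hc2 | hc2
      · have hM : (0:ℝ) ≤ (m + α + 1) * (m + α + 2) := by nlinarith
        have hMx : ((m + α + 1) * (m + α + 2)) * x ≤
            ((m + α + 1) * (m + α + 2)) * (m + α / 2) :=
          mul_le_mul_of_nonneg_left hxub hM
        have h0 := aux_poly2a m α hm hc hc2
        linarith
      · have hN := aux_poly2bN m α hm hc2
        have hSM := aux_poly2bS m α hm hc2
        rcases le_or_gt ((α + 2) * (α + 3) * (3 * m + 2 * α + 2)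
            - (2 * m + α + 1) * (2 * (m + α + 1) * (m + α + 2))
            + ((m + α + 1) * (m + α + 2)) * x) 0 with h | h
        · linarith
        · have hM : (0:ℝ) ≤ (m + α + 1) * (m + α + 2) := by nlinarith
          have h4 : (α + 2) * (α + 3) * (3 * m + 2 * α + 2)
              - (2 * m + α + 1) * (2 * (m + α + 1) * (m + α + 2))
              + ((m + α + 1) * (m + α + 2)) * x ≤
              ((m + α + 1) * (m + α + 2)) * x := by linarith
          have h5 := pow_le_pow_left₀ h.le h4 2
          have h3 : (((m + α + 1) * (m + α + 2)) * x) ^ 2 =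
              ((m + α + 1) * (m + α + 2)) ^ 2 * (m ^ 2 - 2 * m + α * m + 2) := by
            rw [mul_pow, hx2]
          rw [hsdef]
          exact Real.le_sqrt_of_sq_le (by linarith)
    have hF : x / 2 ≤ 2 * m + α + 1 -
        ((α + 2) * (α + 3) * (3 * m + 2 * α + 2) - s) /
          (2 * (m + α + 1) * (m + α + 2)) := by
      have h1 : ((α + 2) * (α + 3) * (3 * m + 2 * α + 2) - s) /
          (2 * (m + α + 1) * (m + α + 2)) ≤ 2 * m + α + 1 - x / 2 := by
        rw [div_le_iff₀ hD]; nlinarith [hkey]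
      linarith
    have hprod : x / 2 * (x - 3) ≤
        (2 * m + α + 1 -
          ((α + 2) * (α + 3) * (3 * m + 2 * α + 2) - s) /
            (2 * (m + α + 1) * (m + α + 2))) * (x - 3) :=
      mul_le_mul_of_nonneg_right hF (by linarith)
    have hfin : 1 / 12 * (m * (α + 2) + m ^ 2 + α + 1) < x / 2 * (x - 3) := by
      nlinarith [hx2, hxub,
        mul_nonneg (by linarith : (0:ℝ) ≤ α - m) (by linarith : (0:ℝ) ≤ 5 * m - 10)]
    linarith
end
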